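/- arXiv:1112.0365 — 2 statements merged into one kernel-verified Lean document; each statement's English description precedes it below -/
import Mathlib

section
/- Let R be an integral domain and M a submodule of R^m (elements written componentwise as μ = (μ(1),…,μ(m))), and for each i let M_i denote the image of M under the projection R^m → R^i onto the first i coordinates. Suppose for each i = 1,…,m there is φ_i ∈ M with φ_i(j) = 0 for j < i and φ_i(i) ≠ 0. If for each i the component φ_i(i) generates the kernel of the projection R^i → R^{i-1} intersected with M_i, then the φ_i generate M as an R-module. -/
/-- Triangular bases for filtered submodules.  Let `R` be an integral domain and
`M ⊆ R^m` a submodule.  Suppose for each `i` there is `φ_i ∈ M` with `φ_i(j) = 0` for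
`j < i` and `φ_i(i) ≠ 0`, and that the diagonal entries `φ_i(i)` generate the successive
kernels: any element of `M` vanishing in the coordinates `j < i` has its `i`-th
coordinate a multiple of `φ_i(i)`.  Then the `φ_i` generate `M` as an `R`-module. -/
theorem triangular_classes_generate
    {R : Type*} [CommRing R] [IsDomain R] (m : ℕ)
    (M : Submodule R (Fin m → R))
    (φ : Fin m → (Fin m → R)) (hφM : ∀ i, φ i ∈ M)
    (htri : ∀ i j, j < i → φ i j = 0)
    (hdiag : ∀ i, φ i i ≠ 0)
    (hgen : ∀ μ ∈ M, ∀ i, (∀ j, j < i → μ j = 0) → ∃ c : R, μ i = c * φ i i) :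
    M = Submodule.span R (Set.range φ) := by
  have key : ∀ n k, k + n = m → ∀ μ ∈ M, (∀ j : Fin m, (j : ℕ) < k → μ j = 0) →
      μ ∈ Submodule.span R (Set.range φ) := by
    intro n
    induction n with
    | zero =>
      intro k hk μ _ hz
      have : μ = 0 := by
        funext j
        exact hz j (by omega)
      simp [this]
    | succ n ih =>
      intro k hk μ hμ hz
      have hkm : k < m := by omega
      set i : Fin m := ⟨k, hkm⟩ with hi
      obtain ⟨c, hc⟩ := hgen μ hμ i (fun j hj => hz j hj)
      have hmem : μ - c • φ i ∈ M := M.sub_mem hμ (M.smul_mem c (hφM i))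
      have h2 : (μ - c • φ i) ∈ Submodule.span R (Set.range φ) := by
        apply ih (k + 1) (by omega) _ hmem
        intro j hj
        rcases Nat.lt_or_ge (j : ℕ) k with h | h
        · simp [hz j h, htri i j (by exact h)]
        · have : j = i := Fin.ext (show (j : ℕ) = (i : ℕ) by simp only [hi]; omega)
          simp [this, hc]
      have h3 : c • φ i ∈ Submodule.span R (Set.range φ) :=
        Submodule.smul_mem _ c (Submodule.subset_span ⟨i, rfl⟩)
      have := Submodule.add_mem _ h2 h3
      simpa using this
  apply le_antisymm
  · intro μ hμ
    exact key m 0 (by omega) μ hμ (fun j hj => absurd hj (by omega))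
  · rw [Submodule.span_le]
    rintro _ ⟨i, rfl⟩
    exact hφM i
end

section
/- Let X be an irreducible affine T-variety with an attractive fixed point x₀. Then X is rationally smooth at x₀ if and only if X is rationally smooth at every point. -/
/-- Let `X` be an (irreducible affine) `T`-variety with an attractive fixed point `x₀`
(`lim_{t→0} λ(t)·y = x₀` for all `y ∈ X`, for a suitable one-parameter subgroup
`λ : ℂ* → T`).  Since the set `RS` of rationally smooth points of `X` is open and
`T`-stable, `X` is rationally smooth at `x₀` if and only if `X` is rationally smooth at
every point. -/
theorem rationally_smooth_at_attractive_point_iff_everywhere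
    {X : Type*} [TopologicalSpace X]
    {T : Type*} [Group T] [MulAction T X]
    (lam : ℂˣ →* T) (x₀ : X)
    (hfix : ∀ g : T, g • x₀ = x₀)
    (hattr : ∀ y : X, Filter.Tendsto (fun t : ℂˣ => lam t • y)
      (Filter.comap (Units.val : ℂˣ → ℂ) (nhdsWithin (0 : ℂ) {0}ᶜ)) (nhds x₀))
    (RS : Set X) (hRSopen : IsOpen RS)
    (hRSstab : ∀ g : T, ∀ p ∈ RS, g • p ∈ RS) :
    x₀ ∈ RS ↔ ∀ p : X, p ∈ RS := by
  constructor
  · intro h0 y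
    -- the punctured-neighborhood filter pulled back to ℂˣ is nontrivial
    have hNB : Filter.NeBot
        (Filter.comap (Units.val : ℂˣ → ℂ) (nhdsWithin (0 : ℂ) {0}ᶜ)) := by
      haveI : Filter.NeBot (nhdsWithin (0 : ℂ) {0}ᶜ) :=
        inferInstanceAs (Filter.NeBot (nhdsWithin (0:ℂ) {(0:ℂ)}ᶜ))
      refine Filter.comap_neBot (fun s hs => ?_)
      obtain ⟨z, hzs, hz0⟩ :=
        Filter.nonempty_of_mem (Filter.inter_mem hs self_mem_nhdsWithin)
      exact ⟨Units.mk0 z hz0, hzs⟩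
    -- RS is a neighborhood of x₀, so eventually `lam t • y ∈ RS`
    have hev := (hattr y).eventually (hRSopen.mem_nhds h0)
    obtain ⟨t, ht⟩ := hev.exists
    have := hRSstab ((lam t)⁻¹) _ ht
    rwa [inv_smul_smul] at this
  · intro h; exact h x₀
end
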